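/- For any periodic sequences S, Q ⊆ ℝ, Elm^o(S,Q) = 0 if and only if there exists t ∈ ℝ with Q = {x + t : x ∈ S}, i.e. the oriented elastic metric satisfies the first metric axiom on translation classes of periodic sequences. -/

import Mathlib

/-- A periodic sequence in `ℝ` with an `m`-point motif `p` and period `l`:
the set `{p i + l * j : i ∈ Fin m, j ∈ ℤ}` where `0 ≤ p 0 < p 1 < ⋯ < p (m-1) < l`. -/
structure PSeq (m : ℕ) where
  m_pos : 0 < m
  l : ℝ
  l_pos : 0 < l
  p : Fin m → ℝ
  p_strict : StrictMono p
  p0_nonneg : 0 ≤ p ⟨0, m_pos⟩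
  p_lt : ∀ i, p i < l

namespace PSeq

variable {m : ℕ}

/-- The set of points of the periodic sequence. -/
def pts (S : PSeq m) : Set ℝ := {x | ∃ (i : Fin m) (j : ℤ), x = S.p i + S.l * j}

/-- The period is minimal: the same set of points cannot be produced with a smaller period. -/
def IsMinimal (S : PSeq m) : Prop := ∀ (m' : ℕ) (T : PSeq m'), T.pts = S.pts → S.l ≤ T.l

/-- The distance list `D` of the periodic sequence, indexed by `ZMod m`:
`D i = p (i+1) - p i` for `i < m - 1`, and `D (m-1) = (p 0 + l) - p (m-1)`. -/
noncomputable def D (S : PSeq m) : ZMod m → ℝ := fun i =>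
  letI : NeZero m := ⟨S.m_pos.ne'⟩
  if h : i.val + 1 < m then S.p ⟨i.val + 1, h⟩ - S.p ⟨i.val, i.val_lt⟩
  else S.p ⟨0, S.m_pos⟩ + S.l - S.p ⟨i.val, i.val_lt⟩

end PSeq

/-- The cyclic shift `σ_s` acting on vectors indexed by `ZMod n`: `(σ_s v) i = v (i + s)`. -/
def shiftVec {n : ℕ} (s : ZMod n) (v : ZMod n → ℝ) : ZMod n → ℝ := fun i => v (i + s)

/-- The reversal `ρ`: `(ρ v) i = v (m - 1 - i)` (note `m - 1 = -1` in `ZMod m`). -/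
def revVec {n : ℕ} (v : ZMod n → ℝ) : ZMod n → ℝ := fun i => v (-1 - i)

/-- The Minkowski sup-norm `‖v‖_∞ = max_i |v i|` of a vector indexed by `ZMod n`, `n > 0`. -/
noncomputable def supNorm {n : ℕ} (hn : 0 < n) (v : ZMod n → ℝ) : ℝ :=
  letI : NeZero n := ⟨hn.ne'⟩
  Finset.univ.sup' (Finset.univ_nonempty_iff.mpr ⟨0⟩) fun i => |v i|

namespace PSeq

/-- The distance list of the multiple `(n / m) S` of a periodic sequence `S` with `m ∣ n`,
i.e. the `(n/m)`-fold concatenation of `D S`, indexed by `ZMod n`. -/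
noncomputable def Dc {m : ℕ} (S : PSeq m) (n : ℕ) : ZMod n → ℝ :=
  fun i => S.D ((i.val : ZMod m))

/-- The oriented elastic metric `Elm^o(S,Q)`: with `n = lcm(m₁, m₂)`, the minimum over all
cyclic shifts `s ∈ ZMod n` of `‖D((n/m₁)S) - σ_s(D((n/m₂)Q))‖_∞`. -/
noncomputable def Elmo {m₁ m₂ : ℕ} (S : PSeq m₁) (Q : PSeq m₂) : ℝ :=
  letI : NeZero (Nat.lcm m₁ m₂) := ⟨(Nat.lcm_pos S.m_pos Q.m_pos).ne'⟩
  Finset.univ.inf' (Finset.univ_nonempty_iff.mpr ⟨0⟩)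
    fun s : ZMod (Nat.lcm m₁ m₂) =>
      supNorm (Nat.lcm_pos S.m_pos Q.m_pos)
        fun i => S.Dc (Nat.lcm m₁ m₂) i - shiftVec s (Q.Dc (Nat.lcm m₁ m₂)) i

/-- The unoriented elastic metric `Elm(S,Q)`: the minimum over all `2n` permutations
`σ_s` and `σ_s ∘ ρ` of `‖D((n/m₁)S) - σ(D((n/m₂)Q))‖_∞`, where `n = lcm(m₁, m₂)`. -/
noncomputable def Elm {m₁ m₂ : ℕ} (S : PSeq m₁) (Q : PSeq m₂) : ℝ :=
  letI : NeZero (Nat.lcm m₁ m₂) := ⟨(Nat.lcm_pos S.m_pos Q.m_pos).ne'⟩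
  min
    (Finset.univ.inf' (Finset.univ_nonempty_iff.mpr ⟨0⟩)
      fun s : ZMod (Nat.lcm m₁ m₂) =>
        supNorm (Nat.lcm_pos S.m_pos Q.m_pos)
          fun i => S.Dc (Nat.lcm m₁ m₂) i - shiftVec s (Q.Dc (Nat.lcm m₁ m₂)) i)
    (Finset.univ.inf' (Finset.univ_nonempty_iff.mpr ⟨0⟩)
      fun s : ZMod (Nat.lcm m₁ m₂) =>
        supNorm (Nat.lcm_pos S.m_pos Q.m_pos)
          fun i => S.Dc (Nat.lcm m₁ m₂) i - shiftVec s (revVec (Q.Dc (Nat.lcm m₁ m₂))) i)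

end PSeq

/-!
Enumerate the points of a periodic sequence increasingly as `seq : ℤ → ℝ`; the cyclically
repeated distance list is exactly its sequence of consecutive gaps. Two strictly increasing
enumerations of the same set differ by an index shift, and two sequences with the same gaps
differ by a constant. So `Q` is a translate of `S` iff the gap sequences of `S` and `Q` agree
up to an index shift `c ∈ ℤ`, iff `D((n/m₁)S) = σ_s D((n/m₂)Q)` for `s = c mod n`.
-/

lemma Finset.inf'_eq_iff_of_le {ι α : Type*} [LinearOrder α] {s : Finset ι} (hs : s.Nonempty)
    {f : ι → α} {a : α} (hf : ∀ i ∈ s, a ≤ f i) : s.inf' hs f = a ↔ ∃ i ∈ s, f i = a := by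
  constructor
  · intro h
    obtain ⟨i, hi, hfi⟩ := s.exists_mem_eq_inf' hs f
    exact ⟨i, hi, hfi ▸ h⟩
  · rintro ⟨i, hi, rfl⟩
    exact le_antisymm (s.inf'_le f hi) (s.le_inf' hs f hf)

lemma OrderIso.int_apply_eq_add (e : ℤ ≃o ℤ) (k : ℤ) : e k = k + e 0 := by
  have hsucc (j : ℤ) : e (j + 1) = e j + 1 := by
    simpa only [Order.succ_eq_add_one] using e.map_succ j
  induction k using Int.induction_on with
  | zero => rw [zero_add]
  | succ j ih => rw [hsucc, ih]; ring
  | pred j ih =>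
    have hj := hsucc (-j - 1)
    rw [sub_add_cancel, ih] at hj
    linarith

lemma StrictMono.exists_eq_comp_add_of_range_eq {β : Type*} [Preorder β] {f g : ℤ → β}
    (hf : StrictMono f) (hg : StrictMono g) (h : Set.range f = Set.range g) :
    ∃ c : ℤ, ∀ k, f k = g (k + c) := by
  let e : ℤ ≃o ℤ := (hf.orderIso f).trans ((OrderIso.setCongr _ _ h).trans (hg.orderIso g).symm)
  refine ⟨e 0, fun k => ?_⟩
  have hfg : g (e k) = f k := congrArg Subtype.val ((hg.orderIso g).apply_symm_apply _)
  rw [← e.int_apply_eq_add, hfg]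

lemma exists_eq_add_const_iff_sub_eq {G : Type*} [AddCommGroup G] {f g : ℤ → G} :
    (∃ t, ∀ k, f k = g k + t) ↔ ∀ k, f (k + 1) - f k = g (k + 1) - g k := by
  constructor
  · rintro ⟨t, ht⟩ k
    rw [ht, ht]
    abel
  · intro h
    refine ⟨f 0 - g 0, fun k => ?_⟩
    induction k using Int.induction_on with
    | zero => abel
    | succ j ih =>
      rw [← sub_add_cancel (f (j + 1)) (f j), h, ih]
      abel
    | pred j ih =>
      have hj := h (-j - 1)
      rw [sub_add_cancel] at hj
      rw [← sub_sub_cancel (f (-j)) (f (-j - 1)), hj, ih]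
      abel

lemma supNorm_nonneg {n : ℕ} (hn : 0 < n) (v : ZMod n → ℝ) : 0 ≤ supNorm hn v :=
  have : NeZero n := ⟨hn.ne'⟩
  (abs_nonneg (v 0)).trans (Finset.le_sup' (fun i => |v i|) (Finset.mem_univ 0))

lemma supNorm_eq_zero_iff {n : ℕ} (hn : 0 < n) (v : ZMod n → ℝ) : supNorm hn v = 0 ↔ v = 0 := by
  rw [eq_comm, ← (supNorm_nonneg hn v).ge_iff_eq, supNorm, Finset.sup'_le_iff, funext_iff]
  simp only [Finset.mem_univ, true_implies, abs_nonpos_iff, Pi.zero_apply]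

lemma exists_eq_mul_add_fin {m : ℕ} [NeZero m] (k : ℤ) : ∃ (q : ℤ) (i : Fin m), k = m * q + i := by
  have hm : (0 : ℤ) < m := by exact_mod_cast NeZero.pos m
  refine ⟨k / m, ⟨(k % m).toNat, by have := Int.emod_lt_of_pos k hm; omega⟩, ?_⟩
  show k = m * (k / m) + ((k % m).toNat : ℤ)
  rw [Int.toNat_of_nonneg (Int.emod_nonneg k hm.ne'), Int.mul_ediv_add_emod]

namespace PSeq

variable {m : ℕ} (S : PSeq m)

lemma D_pos (i : ZMod m) : 0 < S.D i := by
  have : NeZero m := ⟨S.m_pos.ne'⟩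
  unfold D
  split_ifs
  · exact sub_pos.mpr (S.p_strict (Fin.mk_lt_mk.mpr (Nat.lt_succ_self _)))
  · linarith [S.p_lt ⟨i.val, i.val_lt⟩, S.p0_nonneg]

/-- The points of `S` in increasing order: `seq (m * q + i) = p i + l * q`. -/
noncomputable def seq (k : ℤ) : ℝ :=
  have : NeZero m := ⟨S.m_pos.ne'⟩
  S.p ⟨(k : ZMod m).val, ZMod.val_lt _⟩ + S.l * (k / m : ℤ)

lemma val_intCast_mul_add [NeZero m] (q : ℤ) (i : Fin m) :
    (((m * q + i : ℤ)) : ZMod m).val = i := by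
  push_cast
  rw [ZMod.natCast_self, zero_mul, zero_add, ZMod.val_natCast, Nat.mod_eq_of_lt i.isLt]

lemma seq_mul_add (q : ℤ) (i : Fin m) : S.seq (m * q + i) = S.p i + S.l * q := by
  have : NeZero m := ⟨S.m_pos.ne'⟩
  have hq : (m * q + i : ℤ) / m = q := by
    rw [Int.mul_add_ediv_left _ _ (by exact_mod_cast S.m_pos.ne'),
      Int.ediv_eq_zero_of_lt (by positivity) (by exact_mod_cast i.isLt), add_zero]
  simp only [seq, val_intCast_mul_add, hq]

lemma seq_add_one (k : ℤ) : S.seq (k + 1) = S.seq k + S.D k := by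
  have : NeZero m := ⟨S.m_pos.ne'⟩
  obtain ⟨q, i, rfl⟩ := exists_eq_mul_add_fin (m := m) k
  simp only [D, val_intCast_mul_add, seq_mul_add]
  split_ifs with h
  · rw [show (m * q + i + 1 : ℤ) = m * q + (⟨i + 1, h⟩ : Fin m) by push_cast; ring, seq_mul_add]
    ring
  · have hi : (i : ℤ) + 1 = m := by omega
    rw [show (m * q + i + 1 : ℤ) = m * (q + 1) + (⟨0, S.m_pos⟩ : Fin m) by
      push_cast; linear_combination hi, seq_mul_add]
    push_cast
    ring

lemma seq_strictMono : StrictMono S.seq :=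
  strictMono_int_of_lt_succ fun k => by linarith [S.seq_add_one k, S.D_pos k]

lemma pts_eq_range_seq : S.pts = Set.range S.seq := by
  ext x
  constructor
  · rintro ⟨i, j, rfl⟩
    exact ⟨m * j + i, S.seq_mul_add j i⟩
  · rintro ⟨k, rfl⟩
    have : NeZero m := ⟨S.m_pos.ne'⟩
    obtain ⟨q, i, rfl⟩ := exists_eq_mul_add_fin (m := m) k
    exact ⟨i, q, S.seq_mul_add q i⟩

lemma Dc_intCast {n : ℕ} [NeZero n] (hmn : m ∣ n) (k : ℤ) : S.Dc n k = S.D k := by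
  rw [Dc, ← ZMod.cast_eq_val, ZMod.cast_intCast hmn]

variable {m₁ m₂ : ℕ}

lemma pts_eq_image_add_iff (S : PSeq m₁) (Q : PSeq m₂) (t : ℝ) :
    Q.pts = (· + t) '' S.pts ↔ ∃ c : ℤ, ∀ k, Q.seq (k + c) = S.seq k + t := by
  rw [Q.pts_eq_range_seq, S.pts_eq_range_seq, ← Set.range_comp]
  constructor
  · intro h
    obtain ⟨c, hc⟩ := (S.seq_strictMono.add_const t).exists_eq_comp_add_of_range_eq
      Q.seq_strictMono h.symm
    exact ⟨c, fun k => (hc k).symm⟩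
  · rintro ⟨c, hc⟩
    rw [← (add_right_surjective c).range_comp]
    exact congrArg Set.range (funext hc)

lemma Elmo_eq_zero_iff (S : PSeq m₁) (Q : PSeq m₂) :
    Elmo S Q = 0 ↔ ∃ s : ZMod (Nat.lcm m₁ m₂), ∀ i,
      S.Dc (Nat.lcm m₁ m₂) i = Q.Dc (Nat.lcm m₁ m₂) (i + s) := by
  rw [Elmo, Finset.inf'_eq_iff_of_le _ fun s _ => supNorm_nonneg _ _]
  simp only [Finset.mem_univ, true_and, supNorm_eq_zero_iff, funext_iff, shiftVec,
    Pi.zero_apply, sub_eq_zero]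

lemma exists_Dc_eq_shift_iff (S : PSeq m₁) (Q : PSeq m₂) :
    (∃ s : ZMod (Nat.lcm m₁ m₂), ∀ i, S.Dc (Nat.lcm m₁ m₂) i = Q.Dc (Nat.lcm m₁ m₂) (i + s)) ↔
      ∃ c : ℤ, ∀ k : ℤ, S.D k = Q.D (k + c) := by
  have : NeZero (Nat.lcm m₁ m₂) := ⟨(Nat.lcm_pos S.m_pos Q.m_pos).ne'⟩
  have hDc (k : ℤ) : S.Dc (Nat.lcm m₁ m₂) k = S.D k := S.Dc_intCast (Nat.dvd_lcm_left _ _) k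
  have hQc (k : ℤ) : Q.Dc (Nat.lcm m₁ m₂) k = Q.D k := Q.Dc_intCast (Nat.dvd_lcm_right _ _) k
  constructor
  · rintro ⟨s, hs⟩
    obtain ⟨c, rfl⟩ := ZMod.intCast_surjective s
    refine ⟨c, fun k => ?_⟩
    simpa only [hDc, ← Int.cast_add, hQc] using hs k
  · rintro ⟨c, hc⟩
    refine ⟨c, fun i => ?_⟩
    obtain ⟨k, rfl⟩ := ZMod.intCast_surjective i
    simpa only [hDc, ← Int.cast_add, hQc] using hc k

end PSeq

/-- the oriented elastic metric vanishes exactly on pairs of periodic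
sequences related by translation (first metric axiom on translation classes). -/
theorem Elmo_eq_zero_iff_translation {m₁ m₂ : ℕ} (S : PSeq m₁) (Q : PSeq m₂) :
    PSeq.Elmo S Q = 0 ↔ ∃ t : ℝ, Q.pts = (fun x => x + t) '' S.pts := by
  simp only [PSeq.Elmo_eq_zero_iff, PSeq.exists_Dc_eq_shift_iff, PSeq.pts_eq_image_add_iff]
  rw [exists_comm]
  refine exists_congr fun c => ?_
  rw [exists_eq_add_const_iff_sub_eq (f := fun k => Q.seq (k + c))]
  refine forall_congr' fun k => ?_
  rw [add_right_comm k 1 c, Q.seq_add_one, S.seq_add_one, add_sub_cancel_left,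
    add_sub_cancel_left, Int.cast_add, eq_comm]
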